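/- arXiv:1708.02668 — 9 statements merged into one kernel-verified Lean document; each statement's English description precedes it below -/
import Mathlib

section
/- Autarky implies persistency: if a labeling x : V → L is an autarky on S ⊆ V, then x is persistent on S, i.e., every global minimizer of the energy E agrees with x on S. -/
open scoped Classical

namespace MRF1

variable {V L : Type*}

/-- Energy of a labeling. -/
noncomputable def energy [Fintype V] (θu : V → L → ℝ) (E : Finset (V × V))
    (θp : V × V → L → L → ℝ) (x : V → L) : ℝ :=
  ∑ i, θu i (x i) + ∑ e ∈ E, θp e (x e.1) (x e.2)

/-- `paste S x z` is the labeling equal to `x` on `S` and to `z` off `S`. -/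
def paste [DecidableEq V] (S : Finset V) (x z : V → L) : V → L :=
  fun i => if i ∈ S then x i else z i

/-- `x` is persistent on `S`: every global minimizer agrees with `x` on `S`. -/
def Persistent [Fintype V] (θu : V → L → ℝ) (E : Finset (V × V))
    (θp : V × V → L → L → ℝ) (S : Finset V) (x : V → L) : Prop :=
  ∀ xstar : V → L, (∀ z : V → L, energy θu E θp xstar ≤ energy θu E θp z) →
    ∀ i ∈ S, xstar i = x i

/-- `x` is an autarky on `S`. -/
def Autarky [Fintype V] [DecidableEq V] (θu : V → L → ℝ) (E : Finset (V × V))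
    (θp : V × V → L → L → ℝ) (S : Finset V) (x : V → L) : Prop :=
  ∀ z y : V → L, (∃ i ∈ S, y i ≠ x i) →
    energy θu E θp (paste S x z) < energy θu E θp (paste S y z)

theorem autarky_implies_persistent [Fintype V] [DecidableEq V] [Fintype L]
    (θu : V → L → ℝ) (E : Finset (V × V)) (θp : V × V → L → L → ℝ)
    (hE1 : ∀ e ∈ E, e.1 ≠ e.2) (hE2 : ∀ i j : V, (i, j) ∈ E → (j, i) ∉ E)
    (hL : Nontrivial L)
    (S : Finset V) (x : V → L)
    (hA : Autarky θu E θp S x) :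
    Persistent θu E θp S x := by
  intro xstar hmin i hi
  by_contra h
  have hp : paste S xstar xstar = xstar := by
    funext j; simp [paste]
  have := hA xstar xstar ⟨i, hi, h⟩
  rw [hp] at this
  exact absurd (hmin (paste S x xstar)) (not_le.mpr this)

end MRF1
end

section
/- Soundness of the covering criterion: if for every global minimizer z* of E the restriction z*|_{N(S)} is good for (x, S), then x is persistent on S. -/
open scoped Classical

namespace MRF3

variable {V L : Type*}

/-- Energy of a labeling. -/
noncomputable def energy [Fintype V] (θu : V → L → ℝ) (E : Finset (V × V))
    (θp : V × V → L → L → ℝ) (x : V → L) : ℝ :=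
  ∑ i, θu i (x i) + ∑ e ∈ E, θp e (x e.1) (x e.2)

/-- `paste S x z` is the labeling equal to `x` on `S` and to `z` off `S`. -/
def paste [DecidableEq V] (S : Finset V) (x z : V → L) : V → L :=
  fun i => if i ∈ S then x i else z i

/-- Δ(x_S → y_S | z) -/
noncomputable def delta [Fintype V] [DecidableEq V] (θu : V → L → ℝ)
    (E : Finset (V × V)) (θp : V × V → L → L → ℝ)
    (S : Finset V) (x y z : V → L) : ℝ :=
  energy θu E θp (paste S y z) - energy θu E θp (paste S x z)

/-- The neighborhood N(S). -/
def nbhd [Fintype V] [DecidableEq V] (E : Finset (V × V)) (S : Finset V) :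
    Finset V :=
  Finset.univ.filter (fun j => j ∉ S ∧ ∃ i ∈ S, (i, j) ∈ E ∨ (j, i) ∈ E)

/-- `x` is persistent on `S`: every global minimizer agrees with `x` on `S`. -/
def Persistent [Fintype V] (θu : V → L → ℝ) (E : Finset (V × V))
    (θp : V × V → L → L → ℝ) (S : Finset V) (x : V → L) : Prop :=
  ∀ xstar : V → L, (∀ z : V → L, energy θu E θp xstar ≤ energy θu E θp z) →
    ∀ i ∈ S, xstar i = x i

/-- A map `w : N(S) → L` is good for `(x, S)`. -/
def Good [Fintype V] [DecidableEq V] (θu : V → L → ℝ) (E : Finset (V × V))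
    (θp : V × V → L → L → ℝ) (S : Finset V) (x : V → L)
    (w : {j // j ∈ nbhd E S} → L) : Prop :=
  ∀ z : V → L, (∀ j : {j // j ∈ nbhd E S}, z j.1 = w j) →
    ∀ y : V → L, (∃ i ∈ S, y i ≠ x i) →
      0 < delta θu E θp S x y z

theorem covering_sound [Fintype V] [DecidableEq V] [Fintype L]
    (θu : V → L → ℝ) (E : Finset (V × V)) (θp : V × V → L → L → ℝ)
    (hE1 : ∀ e ∈ E, e.1 ≠ e.2) (hE2 : ∀ i j : V, (i, j) ∈ E → (j, i) ∉ E)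
    (hL : Nontrivial L)
    (S : Finset V) (x : V → L)
    (h : ∀ zstar : V → L, (∀ z : V → L, energy θu E θp zstar ≤ energy θu E θp z) →
      Good θu E θp S x (fun j => zstar j.1)) :
    Persistent θu E θp S x := by
  intro xstar hmin i hi
  by_contra hne
  have hgood := h xstar hmin xstar (fun j => rfl) xstar ⟨i, hi, hne⟩
  have hpaste : paste S xstar xstar = xstar := by
    funext j; simp [paste]
  rw [delta, hpaste] at hgood
  have := hmin (paste S x xstar)
  linarith

end MRF3
end

section
/- Lower bound for the discriminative criterion (Lemma 5): fix i ∈ V and a labeling x : V → L with x(i) = a. For j ∈ N({i}) define A_j := {ℓ ∈ L : every w : N({i}) → L with w(j) = ℓ is good for (x, {i})}. Let (q_j)_{j∈N({i})} be probability distributions on L, let q be the product distribution on maps w : N({i}) → L given by q(w) = Π_j q_j(w(j)), let Q_j = Σ_{ℓ∈A_j} q_j(ℓ), and fix a linear order ≺ on N({i}). Then Σ_{j∈N({i})} Q_j · Π_{k∈N({i}), k≺j} (1 − Q_k) ≤ Σ_{w good for (x,{i})} q(w). -/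
open scoped Classical

namespace MRF7

variable {V L : Type*}

/-- Energy of a labeling. -/
noncomputable def energy [Fintype V] (θu : V → L → ℝ) (E : Finset (V × V))
    (θp : V × V → L → L → ℝ) (x : V → L) : ℝ :=
  ∑ i, θu i (x i) + ∑ e ∈ E, θp e (x e.1) (x e.2)

/-- `paste S x z` is the labeling equal to `x` on `S` and to `z` off `S`. -/
def paste [DecidableEq V] (S : Finset V) (x z : V → L) : V → L :=
  fun i => if i ∈ S then x i else z i

/-- Δ(x_S → y_S | z) -/
noncomputable def delta [Fintype V] [DecidableEq V] (θu : V → L → ℝ)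
    (E : Finset (V × V)) (θp : V × V → L → L → ℝ)
    (S : Finset V) (x y z : V → L) : ℝ :=
  energy θu E θp (paste S y z) - energy θu E θp (paste S x z)

/-- The neighborhood N(S). -/
def nbhd [Fintype V] [DecidableEq V] (E : Finset (V × V)) (S : Finset V) :
    Finset V :=
  Finset.univ.filter (fun j => j ∉ S ∧ ∃ i ∈ S, (i, j) ∈ E ∨ (j, i) ∈ E)

/-- A map `w : N(S) → L` is good for `(x, S)`. -/
def Good [Fintype V] [DecidableEq V] (θu : V → L → ℝ) (E : Finset (V × V))
    (θp : V × V → L → L → ℝ) (S : Finset V) (x : V → L)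
    (w : {j // j ∈ nbhd E S} → L) : Prop :=
  ∀ z : V → L, (∀ j : {j // j ∈ nbhd E S}, z j.1 = w j) →
    ∀ y : V → L, (∃ i ∈ S, y i ≠ x i) →
      0 < delta θu E θp S x y z

/-- `A j`: the set of labels ℓ such that every `w` with `w j = ℓ` is good for `(x, {i})`. -/
noncomputable def goodLabels [Fintype V] [DecidableEq V] [Fintype L]
    (θu : V → L → ℝ) (E : Finset (V × V)) (θp : V × V → L → L → ℝ)
    (i : V) (x : V → L) (j : {j // j ∈ nbhd E ({i} : Finset V)}) : Finset L :=
  Finset.univ.filter (fun ℓ : L =>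
    ∀ w : {j // j ∈ nbhd E ({i} : Finset V)} → L, w j = ℓ →
      Good θu E θp {i} x w)

theorem lower_bound_criterion [Fintype V] [DecidableEq V] [Fintype L]
    (θu : V → L → ℝ) (E : Finset (V × V)) (θp : V × V → L → L → ℝ)
    (hE1 : ∀ e ∈ E, e.1 ≠ e.2) (hE2 : ∀ i' j' : V, (i', j') ∈ E → (j', i') ∉ E)
    (hL : Nontrivial L)
    (i : V) (a : L) (x : V → L) (hx : x i = a)
    (qj : {j // j ∈ nbhd E ({i} : Finset V)} → L → ℝ)
    (hq0 : ∀ j ℓ, 0 ≤ qj j ℓ) (hq1 : ∀ j, ∑ ℓ, qj j ℓ = 1)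
    (r : LinearOrder {j // j ∈ nbhd E ({i} : Finset V)}) :
    (∑ j : {j // j ∈ nbhd E ({i} : Finset V)},
        (∑ ℓ ∈ goodLabels θu E θp i x j, qj j ℓ) *
          ∏ k ∈ Finset.univ.filter (fun k => r.lt k j),
            (1 - ∑ ℓ ∈ goodLabels θu E θp i x k, qj k ℓ)) ≤
      ∑ w : {j // j ∈ nbhd E ({i} : Finset V)} → L,
        if Good θu E θp {i} x w then ∏ j, qj j (w j) else 0 := by
  letI : LinearOrder {j // j ∈ nbhd E ({i} : Finset V)} := r
  set A : {j // j ∈ nbhd E ({i} : Finset V)} → Finset L := goodLabels θu E θp i x with hA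
  set P : ({j // j ∈ nbhd E ({i} : Finset V)} → L) → ℝ := fun w => ∏ j, qj j (w j) with hP
  have hP0 : ∀ w, 0 ≤ P w := fun w => Finset.prod_nonneg fun j _ => hq0 j (w j)
  have hBgood : ∀ w : {j // j ∈ nbhd E ({i} : Finset V)} → L,
      (∃ j, w j ∈ A j) → Good θu E θp {i} x w := by
    rintro w ⟨j, hj⟩
    simp only [hA, goodLabels, Finset.mem_filter] at hj
    exact hj.2 w rfl
  have step1 : (∑ w : {j // j ∈ nbhd E ({i} : Finset V)} → L,
        if (∃ j, w j ∈ A j) then P w else 0)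
      ≤ ∑ w : {j // j ∈ nbhd E ({i} : Finset V)} → L,
        if Good θu E θp {i} x w then P w else 0 := by
    refine Finset.sum_le_sum fun w _ => ?_
    by_cases hB : ∃ j, w j ∈ A j
    · rw [if_pos hB, if_pos (hBgood w hB)]
    · rw [if_neg hB]
      split_ifs with h
      · exact hP0 w
      · exact le_rfl
  have step2 : ∀ w : {j // j ∈ nbhd E ({i} : Finset V)} → L,
      (if (∃ j, w j ∈ A j) then P w else 0)
        = ∑ j, if (w j ∈ A j ∧ ∀ k, k < j → w k ∉ A k) then P w else 0 := by
    intro w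
    by_cases hB : ∃ j, w j ∈ A j
    · obtain ⟨j0, hj0⟩ := hB
      set T := Finset.univ.filter (fun j => w j ∈ A j) with hT
      have hTne : T.Nonempty := ⟨j0, by simp [hT, hj0]⟩
      set m := T.min' hTne with hm'
      have hm : w m ∈ A m := (Finset.mem_filter.mp (T.min'_mem hTne)).2
      rw [if_pos ⟨j0, hj0⟩, Finset.sum_eq_single m]
      · rw [if_pos]
        refine ⟨hm, fun k hk hkA => ?_⟩
        exact absurd (T.min'_le k (by simp [hT, hkA])) (not_le.mpr hk)
      · intro j _ hj
        rw [if_neg]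
        rintro ⟨hjA, hmin⟩
        have hlt : m < j := lt_of_le_of_ne (T.min'_le j (by simp [hT, hjA])) (Ne.symm hj)
        exact hmin m hlt hm
      · intro h; exact absurd (Finset.mem_univ m) h
    · rw [if_neg hB]
      refine (Finset.sum_eq_zero fun j _ => ?_).symm
      rw [if_neg]
      rintro ⟨hj, -⟩
      exact hB ⟨j, hj⟩
  have step3 : ∀ j : {j // j ∈ nbhd E ({i} : Finset V)},
      (∑ w : {j // j ∈ nbhd E ({i} : Finset V)} → L,
          if (w j ∈ A j ∧ ∀ k, k < j → w k ∉ A k) then P w else 0)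
        = (∑ ℓ ∈ A j, qj j ℓ) *
            ∏ k ∈ Finset.univ.filter (fun k => k < j), (1 - ∑ ℓ ∈ A k, qj k ℓ) := by
    intro j
    set S : {j // j ∈ nbhd E ({i} : Finset V)} → Finset L :=
      fun k => if k = j then A j else if k < j then (A k)ᶜ else Finset.univ with hS
    have hmem : ∀ w : {j // j ∈ nbhd E ({i} : Finset V)} → L,
        (w j ∈ A j ∧ ∀ k, k < j → w k ∉ A k) ↔ w ∈ Fintype.piFinset S := by
      intro w
      rw [Fintype.mem_piFinset]
      constructor
      · rintro ⟨h1, h2⟩ k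
        rcases eq_or_ne k j with rfl | hkj
        · simp [hS, h1]
        · by_cases hk : k < j
          · simp [hS, hkj, hk, h2 k hk]
          · simp [hS, hkj, hk]
      · intro h
        refine ⟨by simpa [hS] using h j, fun k hk => ?_⟩
        have hkj : k ≠ j := ne_of_lt hk
        simpa [hS, hkj, hk] using h k
    have : (∑ w : {j // j ∈ nbhd E ({i} : Finset V)} → L,
          if (w j ∈ A j ∧ ∀ k, k < j → w k ∉ A k) then P w else 0)
        = ∑ w ∈ Fintype.piFinset S, P w := by
      rw [Finset.sum_congr rfl fun w _ => if_congr (hmem w) rfl rfl,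
        Finset.sum_ite_mem, Finset.univ_inter]
    rw [this, hP, ← Finset.prod_univ_sum]
    have hval : ∀ k, (∑ ℓ ∈ S k, qj k ℓ)
        = if k = j then (∑ ℓ ∈ A j, qj j ℓ)
          else if k < j then (1 - ∑ ℓ ∈ A k, qj k ℓ) else 1 := by
      intro k
      rcases eq_or_ne k j with rfl | hkj
      · simp [hS]
      · by_cases hk : k < j
        · simp only [hS, hkj, hk, if_false, if_true]
          have := Finset.sum_add_sum_compl (A k) (qj k)
          rw [hq1 k] at this
          linarith
        · simp [hS, hkj, hk, hq1 k]
    rw [Finset.prod_congr rfl fun k _ => hval k]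
    rw [← Finset.prod_filter_mul_prod_filter_not Finset.univ (fun k => k < j)]
    have h1 : ∏ k ∈ Finset.univ.filter (fun k => k < j),
        (if k = j then (∑ ℓ ∈ A j, qj j ℓ)
          else if k < j then (1 - ∑ ℓ ∈ A k, qj k ℓ) else 1)
        = ∏ k ∈ Finset.univ.filter (fun k => k < j), (1 - ∑ ℓ ∈ A k, qj k ℓ) := by
      refine Finset.prod_congr rfl fun k hk => ?_
      rw [Finset.mem_filter] at hk
      simp [ne_of_lt hk.2, hk.2]
    have h2 : ∏ k ∈ Finset.univ.filter (fun k => ¬ k < j),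
        (if k = j then (∑ ℓ ∈ A j, qj j ℓ)
          else if k < j then (1 - ∑ ℓ ∈ A k, qj k ℓ) else 1)
        = ∑ ℓ ∈ A j, qj j ℓ := by
      rw [Finset.prod_eq_single j]
      · simp
      · intro k hk hkj
        rw [Finset.mem_filter] at hk
        simp [hkj, hk.2]
      · intro h
        exact absurd (by simp) h
    rw [h1, h2, mul_comm]
  calc (∑ j : {j // j ∈ nbhd E ({i} : Finset V)},
        (∑ ℓ ∈ goodLabels θu E θp i x j, qj j ℓ) *
          ∏ k ∈ Finset.univ.filter (fun k => r.lt k j),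
            (1 - ∑ ℓ ∈ goodLabels θu E θp i x k, qj k ℓ))
      = ∑ j, ∑ w : {j // j ∈ nbhd E ({i} : Finset V)} → L,
          if (w j ∈ A j ∧ ∀ k, k < j → w k ∉ A k) then P w else 0 := by
        exact (Finset.sum_congr rfl fun j _ => (step3 j).symm)
    _ = ∑ w : {j // j ∈ nbhd E ({i} : Finset V)} → L,
          if (∃ j, w j ∈ A j) then P w else 0 := by
        rw [Finset.sum_comm]
        exact Finset.sum_congr rfl fun w _ => (step2 w).symm
    _ ≤ _ := step1

end MRF7
end

section
/- Sufficient condition via min–sum swap (Equation 9): fix i ∈ V, a ∈ L, j ∈ N({i}) and ℓ ∈ L, and let x : V → L satisfy x(i) = a. For each k ∈ N({i}), let φ_k(u, m) denote the pairwise potential of the unique edge between i and k evaluated with u as the label of i and m as the label of k (i.e., φ_k(u,m) = θ_{ik}(u,m) if (i,k) ∈ E, and φ_k(u,m) = θ_{ki}(m,u) if (k,i) ∈ E). If min_{y∈L, y≠a} (θ_i(y) − θ_i(a)) + min_{y∈L, y≠a} (φ_j(y, ℓ) − φ_j(a, ℓ)) + Σ_{k∈N({i}), k≠j} min_{y∈L,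 y≠a, m∈L} (φ_k(y, m) − φ_k(a, m)) > 0, then every w : N({i}) → L with w(j) = ℓ is good for (x, {i}). -/
open scoped Classical

namespace MRF8

variable {V L : Type*}

/-- Energy of a labeling. -/
noncomputable def energy [Fintype V] (θu : V → L → ℝ) (E : Finset (V × V))
    (θp : V × V → L → L → ℝ) (x : V → L) : ℝ :=
  ∑ i, θu i (x i) + ∑ e ∈ E, θp e (x e.1) (x e.2)

/-- `paste S x z` is the labeling equal to `x` on `S` and to `z` off `S`. -/
def paste [DecidableEq V] (S : Finset V) (x z : V → L) : V → L :=
  fun i => if i ∈ S then x i else z i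

/-- Δ(x_S → y_S | z) -/
noncomputable def delta [Fintype V] [DecidableEq V] (θu : V → L → ℝ)
    (E : Finset (V × V)) (θp : V × V → L → L → ℝ)
    (S : Finset V) (x y z : V → L) : ℝ :=
  energy θu E θp (paste S y z) - energy θu E θp (paste S x z)

/-- The neighborhood N(S). -/
def nbhd [Fintype V] [DecidableEq V] (E : Finset (V × V)) (S : Finset V) :
    Finset V :=
  Finset.univ.filter (fun j => j ∉ S ∧ ∃ i ∈ S, (i, j) ∈ E ∨ (j, i) ∈ E)

/-- A map `w : N(S) → L` is good for `(x, S)`. -/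
def Good [Fintype V] [DecidableEq V] (θu : V → L → ℝ) (E : Finset (V × V))
    (θp : V × V → L → L → ℝ) (S : Finset V) (x : V → L)
    (w : {j // j ∈ nbhd E S} → L) : Prop :=
  ∀ z : V → L, (∀ j : {j // j ∈ nbhd E S}, z j.1 = w j) →
    ∀ y : V → L, (∃ i ∈ S, y i ≠ x i) →
      0 < delta θu E θp S x y z

/-!
Relabelling only the vertex `i` from `a` to `b` changes the energy by `θ_i(b) - θ_i(a)` plus, for
each neighbour `k`, `φ_k(b, z_k) - φ_k(a, z_k)`. Each of these terms is bounded below by the matching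
minimum in the hypothesis; for `k = j` the label `z_j = w_j = ℓ` is fixed.
-/

open Finset Function

lemma paste_singleton [DecidableEq V] (i : V) (y z : V → L) :
    paste {i} y z = update z i (y i) := by
  funext v
  by_cases hv : v = i
  · subst hv; simp [paste]
  · simp [paste, hv]

section Neighbors

variable [Fintype V] [DecidableEq V] {E : Finset (V × V)} {i : V}

lemma mem_nbhd_singleton {k : V} :
    k ∈ nbhd E {i} ↔ k ≠ i ∧ ((i, k) ∈ E ∨ (k, i) ∈ E) := by
  simp [nbhd]

lemma ne_of_mem_nbhd_singleton (k : {k // k ∈ nbhd E {i}}) : k.1 ≠ i :=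
  (mem_nbhd_singleton.mp k.2).1

/-- The neighbour `k` corresponds to whichever of `(i, k)`, `(k, i)` lies in `E`. -/
lemma sum_incident_eq_sum_nbhd_singleton {M : Type*} [AddCommMonoid M]
    (hE1 : ∀ e ∈ E, e.1 ≠ e.2) (hE2 : ∀ u v : V, (u, v) ∈ E → (v, u) ∉ E)
    (g : V × V → M) (F : {k // k ∈ nbhd E {i}} → M)
    (hF₁ : ∀ k : {k // k ∈ nbhd E {i}}, (i, k.1) ∈ E → F k = g (i, k.1))
    (hF₂ : ∀ k : {k // k ∈ nbhd E {i}}, (k.1, i) ∈ E → F k = g (k.1, i)) :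
    ∑ e ∈ E with e.1 = i ∨ e.2 = i, g e = ∑ k, F k := by
  symm
  refine sum_bij (fun k _ => if (i, k.1) ∈ E then (i, k.1) else (k.1, i)) ?_ ?_ ?_ ?_
  · intro k _
    have hk := (mem_nbhd_singleton.mp k.2).2
    split_ifs with hik <;> simp_all
  · intro k _ k' _ hkk'
    have hk := ne_of_mem_nbhd_singleton k
    have hk' := ne_of_mem_nbhd_singleton k'
    apply Subtype.ext
    split_ifs at hkk' <;> simp_all [Prod.ext_iff, eq_comm]
  · rintro ⟨u, v⟩ he
    obtain ⟨heE, rfl | rfl⟩ := mem_filter.mp he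
    · have hv : v ∈ nbhd E {u} := mem_nbhd_singleton.mpr ⟨(hE1 _ heE).symm, .inl heE⟩
      exact ⟨⟨v, hv⟩, mem_univ _, by simp [heE]⟩
    · have hu : u ∈ nbhd E {v} := mem_nbhd_singleton.mpr ⟨hE1 _ heE, .inr heE⟩
      exact ⟨⟨u, hu⟩, mem_univ _, by simp [hE2 _ _ heE]⟩
  · intro k _
    split_ifs with hik
    · exact hF₁ k hik
    · exact hF₂ k (((mem_nbhd_singleton.mp k.2).2).resolve_left hik)

end Neighbors

section Energy

variable [Fintype V] [DecidableEq V]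

lemma energy_update_sub_energy_update (θu : V → L → ℝ) (E : Finset (V × V))
    (θp : V × V → L → L → ℝ) (z : V → L) (i : V) (b a : L) :
    energy θu E θp (update z i b) - energy θu E θp (update z i a) =
      (θu i b - θu i a) + ∑ e ∈ E with e.1 = i ∨ e.2 = i,
        (θp e (update z i b e.1) (update z i b e.2) -
          θp e (update z i a e.1) (update z i a e.2)) := by
  have hunary : ∑ v, θu v (update z i b v) - ∑ v, θu v (update z i a v) = θu i b - θu i a := by
    rw [← sum_sub_distrib, sum_eq_single i (fun v _ hv => by simp [hv]) (by simp)]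
    simp
  have hpair : ∑ e ∈ E, θp e (update z i b e.1) (update z i b e.2) -
      ∑ e ∈ E, θp e (update z i a e.1) (update z i a e.2) =
      ∑ e ∈ E with e.1 = i ∨ e.2 = i, (θp e (update z i b e.1) (update z i b e.2) -
        θp e (update z i a e.1) (update z i a e.2)) := by
    rw [← sum_sub_distrib, sum_filter_of_ne]
    intro e _ hne
    by_contra! hfar
    simp [hfar.1, hfar.2] at hne
  rw [energy, energy]
  linarith

lemma delta_singleton_eq_sum_nbhd (θu : V → L → ℝ) {E : Finset (V × V)}
    (θp : V × V → L → L → ℝ)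
    (hE1 : ∀ e ∈ E, e.1 ≠ e.2) (hE2 : ∀ u v : V, (u, v) ∈ E → (v, u) ∉ E) {i : V}
    {φ : {k // k ∈ nbhd E {i}} → L → L → ℝ}
    (hφ₁ : ∀ (k : {k // k ∈ nbhd E {i}}) (u m : L), (i, k.1) ∈ E → φ k u m = θp (i, k.1) u m)
    (hφ₂ : ∀ (k : {k // k ∈ nbhd E {i}}) (u m : L), (k.1, i) ∈ E → φ k u m = θp (k.1, i) m u)
    (x y z : V → L) :
    delta θu E θp {i} x y z =
      (θu i (y i) - θu i (x i)) + ∑ k, (φ k (y i) (z k) - φ k (x i) (z k)) := by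
  rw [delta, paste_singleton, paste_singleton, energy_update_sub_energy_update,
    sum_incident_eq_sum_nbhd_singleton hE1 hE2]
  · intro k hik
    simp [hφ₁ k _ _ hik, ne_of_mem_nbhd_singleton k]
  · intro k hik
    simp [hφ₂ k _ _ hik, ne_of_mem_nbhd_singleton k]

end Energy

theorem min_sum_swap_sufficient_general [Fintype V] [DecidableEq V] [Fintype L]
    (θu : V → L → ℝ) (E : Finset (V × V)) (θp : V × V → L → L → ℝ)
    (hE1 : ∀ e ∈ E, e.1 ≠ e.2) (hE2 : ∀ i' j' : V, (i', j') ∈ E → (j', i') ∉ E)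
    (i : V) (a : L) (j : {k // k ∈ nbhd E ({i} : Finset V)}) (ℓ : L)
    (x : V → L) (hx : x i = a)
    (φ : {k // k ∈ nbhd E ({i} : Finset V)} → L → L → ℝ)
    (hφ₁ : ∀ (k : {k // k ∈ nbhd E ({i} : Finset V)}) (u m : L),
      (i, k.1) ∈ E → φ k u m = θp (i, k.1) u m)
    (hφ₂ : ∀ (k : {k // k ∈ nbhd E ({i} : Finset V)}) (u m : L),
      (k.1, i) ∈ E → φ k u m = θp (k.1, i) m u)
    (h : 0 <
      (⨅ y : {y : L // y ≠ a}, (θu i y.1 - θu i a)) +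
      (⨅ y : {y : L // y ≠ a}, (φ j y.1 ℓ - φ j a ℓ)) +
      ∑ k ∈ Finset.univ.filter
          (fun k : {k // k ∈ nbhd E ({i} : Finset V)} => k ≠ j),
        ⨅ p : {y : L // y ≠ a} × L, (φ k p.1.1 p.2 - φ k a p.2)) :
    ∀ w : {k // k ∈ nbhd E ({i} : Finset V)} → L, w j = ℓ →
      Good θu E θp {i} x w := by
  intro w hw z hz y ⟨i', hi', hyi⟩
  rw [mem_singleton.mp hi', hx] at hyi
  rw [delta_singleton_eq_sum_nbhd θu θp hE1 hE2 hφ₁ hφ₂, hx,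
    ← add_sum_erase _ _ (mem_univ j), ← filter_ne', hz j, hw]
  have hunary : (⨅ y : {y : L // y ≠ a}, (θu i y.1 - θu i a)) ≤ θu i (y i) - θu i a :=
    ciInf_le (Finite.bddBelow_range _) (⟨y i, hyi⟩ : {y : L // y ≠ a})
  have hj : (⨅ y : {y : L // y ≠ a}, (φ j y.1 ℓ - φ j a ℓ)) ≤ φ j (y i) ℓ - φ j a ℓ :=
    ciInf_le (Finite.bddBelow_range _) (⟨y i, hyi⟩ : {y : L // y ≠ a})
  have hrest : ∑ k ∈ univ.filter (· ≠ j),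
        ⨅ p : {y : L // y ≠ a} × L, (φ k p.1.1 p.2 - φ k a p.2) ≤
      ∑ k ∈ univ.filter (· ≠ j), (φ k (y i) (z k) - φ k a (z k)) :=
    sum_le_sum fun k _ => ciInf_le (Finite.bddBelow_range _)
      ((⟨⟨y i, hyi⟩, z k⟩ : {y : L // y ≠ a} × L))
  linarith

theorem min_sum_swap_sufficient [Fintype V] [DecidableEq V] [Fintype L]
    (θu : V → L → ℝ) (E : Finset (V × V)) (θp : V × V → L → L → ℝ)
    (hE1 : ∀ e ∈ E, e.1 ≠ e.2) (hE2 : ∀ i' j' : V, (i', j') ∈ E → (j', i') ∉ E)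
    (hL : Nontrivial L)
    (i : V) (a : L) (j : {k // k ∈ nbhd E ({i} : Finset V)}) (ℓ : L)
    (x : V → L) (hx : x i = a)
    (φ : {k // k ∈ nbhd E ({i} : Finset V)} → L → L → ℝ)
    (hφ₁ : ∀ (k : {k // k ∈ nbhd E ({i} : Finset V)}) (u m : L),
      (i, k.1) ∈ E → φ k u m = θp (i, k.1) u m)
    (hφ₂ : ∀ (k : {k // k ∈ nbhd E ({i} : Finset V)}) (u m : L),
      (k.1, i) ∈ E → φ k u m = θp (k.1, i) m u)
    (h : 0 <
      (⨅ y : {y : L // y ≠ a}, (θu i y.1 - θu i a)) +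
      (⨅ y : {y : L // y ≠ a}, (φ j y.1 ℓ - φ j a ℓ)) +
      ∑ k ∈ Finset.univ.filter
          (fun k : {k // k ∈ nbhd E ({i} : Finset V)} => k ≠ j),
        ⨅ p : {y : L // y ≠ a} × L, (φ k p.1.1 p.2 - φ k a p.2)) :
    ∀ w : {k // k ∈ nbhd E ({i} : Finset V)} → L, w j = ℓ →
      Good θu E θp {i} x w :=
  min_sum_swap_sufficient_general θu E θp hE1 hE2 i a j ℓ x hx φ hφ₁ hφ₂ h

end MRF8
end

section
/- Additive error lemma (Lemma 6): for any S ⊆ V and any labelings x̂, x' : V → L that agree outside S (x̂(j) = x'(j) for all j ∈ V\S), one has E(x̂) ≤ E(x') + Σ_{i∈S} δ_i(x̂). -/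
open scoped Classical

namespace MRF9

variable {V L : Type*}

/-- Energy of a labeling. -/
noncomputable def energy [Fintype V] (θu : V → L → ℝ) (E : Finset (V × V))
    (θp : V × V → L → L → ℝ) (x : V → L) : ℝ :=
  ∑ i, θu i (x i) + ∑ e ∈ E, θp e (x e.1) (x e.2)

/-- δ_i(x̂): the maximum possible decrease in energy obtainable by changing the
label of `i` away from `x̂ i`, over all labels and all configurations of the
other variables. -/
noncomputable def vdelta [Fintype V] [DecidableEq V] (θu : V → L → ℝ)
    (E : Finset (V × V)) (θp : V × V → L → L → ℝ) (xhat : V → L) (i : V) : ℝ :=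
  ⨆ p : L × (V → L),
    (energy θu E θp (Function.update p.2 i (xhat i)) -
      energy θu E θp (Function.update p.2 i p.1))

theorem additive_error_lemma [Fintype V] [DecidableEq V] [Fintype L]
    (θu : V → L → ℝ) (E : Finset (V × V)) (θp : V × V → L → L → ℝ)
    (hE1 : ∀ e ∈ E, e.1 ≠ e.2) (hE2 : ∀ i j : V, (i, j) ∈ E → (j, i) ∉ E)
    (hL : Nontrivial L)
    (S : Finset V) (xhat x' : V → L)
    (hagree : ∀ j, j ∉ S → xhat j = x' j) :
    energy θu E θp xhat ≤ energy θu E θp x' + ∑ i ∈ S, vdelta θu E θp xhat i := by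
  classical
  induction S using Finset.induction generalizing x' with
  | empty =>
    have : xhat = x' := funext fun j => hagree j (Finset.notMem_empty j)
    simp [this]
  | @insert i S' hi ih =>
    set y : V → L := Function.update x' i (xhat i) with hy
    have hagree' : ∀ j, j ∉ S' → xhat j = y j := by
      intro j hj
      by_cases hji : j = i
      · subst hji; simp [hy]
      · have : j ∉ insert i S' := by simp [hji, hj]
        simp [hy, Function.update_of_ne hji, hagree j this]
    have h1 : energy θu E θp xhat ≤ energy θu E θp y + ∑ k ∈ S', vdelta θu E θp xhat k :=
      ih y hagree'
    have h2 : energy θu E θp y ≤ energy θu E θp x' + vdelta θu E θp xhat i := by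
      have hbd : BddAbove (Set.range fun p : L × (V → L) =>
          energy θu E θp (Function.update p.2 i (xhat i)) -
            energy θu E θp (Function.update p.2 i p.1)) :=
        (Set.finite_range _).bddAbove
      have hle := le_ciSup hbd ((x' i, x') : L × (V → L))
      have hx' : Function.update x' i (x' i) = x' := Function.update_eq_self i x'
      rw [vdelta]
      simp only [hx'] at hle
      linarith [hle]
    rw [Finset.sum_insert hi]
    linarith


end MRF9
end

section
/- Per-instance additive bound (Theorem 7): let x* be a global minimizer of E, let S ⊆ V, let ζ ∈ ℝ, and let x̂ : V → L be a labeling such that E(x̂) ≤ E(z) + ζ for every z : V → L with z|_S = x̂|_S (i.e., the values of x̂ off S are within additive error ζ of optimal given x̂|_S fixed). Then E(x̂) ≤ E(x*) + ζ + Σ_{i∈S} δ_i(x̂). -/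
open scoped Classical

namespace MRF10

variable {V L : Type*}

/-- Energy of a labeling. -/
noncomputable def energy [Fintype V] (θu : V → L → ℝ) (E : Finset (V × V))
    (θp : V × V → L → L → ℝ) (x : V → L) : ℝ :=
  ∑ i, θu i (x i) + ∑ e ∈ E, θp e (x e.1) (x e.2)

/-- δ_i(x̂): the maximum possible decrease in energy obtainable by changing the
label of `i` away from `x̂ i`. -/
noncomputable def vdelta [Fintype V] [DecidableEq V] (θu : V → L → ℝ)
    (E : Finset (V × V)) (θp : V × V → L → L → ℝ) (xhat : V → L) (i : V) : ℝ :=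
  ⨆ p : L × (V → L),
    (energy θu E θp (Function.update p.2 i (xhat i)) -
      energy θu E θp (Function.update p.2 i p.1))

theorem per_instance_additive_bound [Fintype V] [DecidableEq V] [Fintype L]
    (θu : V → L → ℝ) (E : Finset (V × V)) (θp : V × V → L → L → ℝ)
    (hE1 : ∀ e ∈ E, e.1 ≠ e.2) (hE2 : ∀ i j : V, (i, j) ∈ E → (j, i) ∉ E)
    (hL : Nontrivial L)
    (xstar : V → L) (hmin : ∀ z : V → L, energy θu E θp xstar ≤ energy θu E θp z)
    (S : Finset V) (ζ : ℝ) (xhat : V → L)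
    (hζ : ∀ z : V → L, (∀ i ∈ S, z i = xhat i) →
      energy θu E θp xhat ≤ energy θu E θp z + ζ) :
    energy θu E θp xhat ≤
      energy θu E θp xstar + ζ + ∑ i ∈ S, vdelta θu E θp xhat i := by
  have hLne : Nonempty L := hL.to_nonempty
  have key : ∀ (w : V → L) (i : V) (y : L),
      energy θu E θp (Function.update w i (xhat i)) -
        energy θu E θp (Function.update w i y) ≤ vdelta θu E θp xhat i := by
    intro w i y
    exact le_ciSup (f := fun p : L × (V → L) =>
      energy θu E θp (Function.update p.2 i (xhat i)) -
        energy θu E θp (Function.update p.2 i p.1))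
      (Set.Finite.bddAbove (Set.finite_range _)) ((y, w) : L × (V → L))
  have main : ∀ T : Finset V,
      energy θu E θp (fun i => if i ∈ T then xhat i else xstar i) ≤
        energy θu E θp xstar + ∑ i ∈ T, vdelta θu E θp xhat i := by
    intro T
    induction T using Finset.induction with
    | empty => simp
    | @insert a T ha ih =>
      set f : V → L := fun i => if i ∈ T then xhat i else xstar i with hf
      have h1 : (fun i => if i ∈ insert a T then xhat i else xstar i) =
          Function.update f a (xhat a) := by
        funext i
        by_cases hia : i = a
        · subst hia; simp [Function.update, hf]
        · simp [Function.update, hia, hf, Finset.mem_insert]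
      have h2 : f = Function.update f a (xstar a) := by
        funext i
        by_cases hia : i = a
        · subst hia; simp [Function.update, hf, ha]
        · simp [Function.update, hia]
      have := key f a (xstar a)
      rw [← h2] at this
      rw [h1, Finset.sum_insert ha]
      linarith
  have hz : ∀ i ∈ S, (fun i => if i ∈ S then xhat i else xstar i) i = xhat i := by
    intro i hi; simp [hi]
  have := hζ _ hz
  have := main S
  linarith

end MRF10
end

section
/- Worst-case additive bound (Corollary 8): let x* be a global minimizer of E, let S ⊆ V, let ζ, ε ∈ ℝ, and let x̂ : V → L be a labeling such that E(x̂) ≤ E(z) + ζ for every z : V → L with z|_S = x̂|_S, and such that δ_i(x̂) ≤ ε for every i ∈ S. Then E(x̂) ≤ E(x*) + ζ + |S|·ε. -/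
open scoped Classical

namespace MRF11

variable {V L : Type*}

/-- Energy of a labeling. -/
noncomputable def energy [Fintype V] (θu : V → L → ℝ) (E : Finset (V × V))
    (θp : V × V → L → L → ℝ) (x : V → L) : ℝ :=
  ∑ i, θu i (x i) + ∑ e ∈ E, θp e (x e.1) (x e.2)

/-- δ_i(x̂): the maximum possible decrease in energy obtainable by changing the
label of `i` away from `x̂ i`. -/
noncomputable def vdelta [Fintype V] [DecidableEq V] (θu : V → L → ℝ)
    (E : Finset (V × V)) (θp : V × V → L → L → ℝ) (xhat : V → L) (i : V) : ℝ :=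
  ⨆ p : L × (V → L),
    (energy θu E θp (Function.update p.2 i (xhat i)) -
      energy θu E θp (Function.update p.2 i p.1))

theorem worst_case_additive_bound [Fintype V] [DecidableEq V] [Fintype L]
    (θu : V → L → ℝ) (E : Finset (V × V)) (θp : V × V → L → L → ℝ)
    (hE1 : ∀ e ∈ E, e.1 ≠ e.2) (hE2 : ∀ i j : V, (i, j) ∈ E → (j, i) ∉ E)
    (hL : Nontrivial L)
    (xstar : V → L) (hmin : ∀ z : V → L, energy θu E θp xstar ≤ energy θu E θp z)
    (S : Finset V) (ζ ε : ℝ) (xhat : V → L)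
    (hζ : ∀ z : V → L, (∀ i ∈ S, z i = xhat i) →
      energy θu E θp xhat ≤ energy θu E θp z + ζ)
    (hδ : ∀ i ∈ S, vdelta θu E θp xhat i ≤ ε) :
    energy θu E θp xhat ≤ energy θu E θp xstar + ζ + S.card * ε := by
  classical
  set f : Finset V → V → L := fun T i => if i ∈ T then xhat i else xstar i with hf
  have key : ∀ T : Finset V, T ⊆ S →
      energy θu E θp (f T) ≤ energy θu E θp xstar + T.card * ε := by
    intro T
    induction T using Finset.induction_on with
    | empty => intro _; simp [hf]
    | @insert a T ha ih =>
      intro hsub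
      have haS : a ∈ S := hsub (Finset.mem_insert_self a T)
      have hTS : T ⊆ S := fun i hi => hsub (Finset.mem_insert_of_mem hi)
      have hfa : f T a = xstar a := by simp [hf, ha]
      have hupd : f (insert a T) = Function.update (f T) a (xhat a) := by
        funext i
        by_cases hi : i = a <;> simp [hf, Function.update_apply, hi]
      have hupd2 : Function.update (f T) a (xstar a) = f T := by
        rw [← hfa, Function.update_eq_self]
      have hstep : energy θu E θp (Function.update (f T) a (xhat a)) -
          energy θu E θp (Function.update (f T) a (xstar a)) ≤ ε := by
        have hb : BddAbove (Set.range fun p : L × (V → L) =>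
            energy θu E θp (Function.update p.2 a (xhat a)) -
              energy θu E θp (Function.update p.2 a p.1)) :=
          (Set.finite_range _).bddAbove
        have := le_ciSup hb ((xstar a, f T) : L × (V → L))
        exact this.trans (hδ a haS)
      rw [hupd2] at hstep
      have ihT := ih hTS
      have hcard : ((insert a T).card : ℝ) = T.card + 1 := by
        rw [Finset.card_insert_of_notMem ha]; push_cast; ring
      rw [hupd, hcard]
      linarith
  have hz : ∀ i ∈ S, f S i = xhat i := by intro i hi; simp [hf, hi]
  have h1 := hζ (f S) hz
  have h2 := key S Finset.Subset.rfl
  linarith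

end MRF11
end

section
/- Worst-case multiplicative bound (Theorem 9): let x* be a global minimizer of E, let S ⊆ V, let β ≥ 1 and ε ∈ ℝ, and let x̂ : V → L be a labeling such that E(x̂) ≤ β·E(z) for every z : V → L with z|_S = x̂|_S, and such that δ_i(x̂) ≤ ε for every i ∈ S. Then E(x̂) ≤ β·E(x*) + β·|S|·ε. -/
open scoped Classical

namespace MRF12

variable {V L : Type*}

/-- Energy of a labeling. -/
noncomputable def energy [Fintype V] (θu : V → L → ℝ) (E : Finset (V × V))
    (θp : V × V → L → L → ℝ) (x : V → L) : ℝ :=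
  ∑ i, θu i (x i) + ∑ e ∈ E, θp e (x e.1) (x e.2)

/-- δ_i(x̂): the maximum possible decrease in energy obtainable by changing the
label of `i` away from `x̂ i`. -/
noncomputable def vdelta [Fintype V] [DecidableEq V] (θu : V → L → ℝ)
    (E : Finset (V × V)) (θp : V × V → L → L → ℝ) (xhat : V → L) (i : V) : ℝ :=
  ⨆ p : L × (V → L),
    (energy θu E θp (Function.update p.2 i (xhat i)) -
      energy θu E θp (Function.update p.2 i p.1))

theorem worst_case_multiplicative_bound [Fintype V] [DecidableEq V] [Fintype L]
    (θu : V → L → ℝ) (E : Finset (V × V)) (θp : V × V → L → L → ℝ)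
    (hE1 : ∀ e ∈ E, e.1 ≠ e.2) (hE2 : ∀ i j : V, (i, j) ∈ E → (j, i) ∉ E)
    (hL : Nontrivial L)
    (xstar : V → L) (hmin : ∀ z : V → L, energy θu E θp xstar ≤ energy θu E θp z)
    (S : Finset V) (β ε : ℝ) (hβ : 1 ≤ β) (xhat : V → L)
    (hβbound : ∀ z : V → L, (∀ i ∈ S, z i = xhat i) →
      energy θu E θp xhat ≤ β * energy θu E θp z)
    (hδ : ∀ i ∈ S, vdelta θu E θp xhat i ≤ ε) :
    energy θu E θp xhat ≤ β * energy θu E θp xstar + β * S.card * ε := by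
  classical
  -- key: single-flip bound from vdelta
  have hflip : ∀ (i : V) (y : L) (w : V → L),
      energy θu E θp (Function.update w i (xhat i)) -
        energy θu E θp (Function.update w i y) ≤ vdelta θu E θp xhat i := by
    intro i y w
    have hbdd : BddAbove (Set.range (fun p : L × (V → L) =>
        energy θu E θp (Function.update p.2 i (xhat i)) -
          energy θu E θp (Function.update p.2 i p.1))) :=
      (Set.finite_range _).bddAbove
    exact le_ciSup hbdd (y, w)
  -- hybrid labeling
  set g : Finset V → V → L := fun T v => if v ∈ T then xhat v else xstar v with hg
  have hkey : ∀ T : Finset V, T ⊆ S →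
      energy θu E θp (g T) ≤ energy θu E θp xstar + T.card * ε := by
    intro T
    induction T using Finset.induction with
    | empty =>
      intro _; simp [hg]
    | @insert i T hi ih =>
      intro hins
      have hTS' : T ⊆ S := fun v hv => hins (Finset.mem_insert_of_mem hv)
      have hiS : i ∈ S := hins (Finset.mem_insert_self i T)
      have h1 : g (insert i T) = Function.update (g T) i (xhat i) := by
        funext v
        by_cases hv : v = i <;> simp [hg, Function.update, hv]
      have h2 : g T = Function.update (g T) i (xstar i) := by
        funext v
        by_cases hv : v = i <;> simp [hg, Function.update, hv, hi]
      have := hflip i (xstar i) (g T)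
      rw [← h1, ← h2] at this
      have hε := hδ i hiS
      have ih' := ih hTS'
      have hcard : ((insert i T).card : ℝ) = T.card + 1 := by
        rw [Finset.card_insert_of_notMem hi]; push_cast; ring
      have : energy θu E θp (g (insert i T)) ≤ energy θu E θp (g T) + ε := by
        linarith
      calc energy θu E θp (g (insert i T)) ≤ energy θu E θp (g T) + ε := this
        _ ≤ energy θu E θp xstar + T.card * ε + ε := by linarith
        _ = energy θu E θp xstar + (insert i T).card * ε := by rw [hcard]; ring
  have hzS : ∀ i ∈ S, g S i = xhat i := by
    intro i hi; simp [hg, hi]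
  have h1 : energy θu E θp xhat ≤ β * energy θu E θp (g S) := hβbound (g S) hzS
  have h2 : energy θu E θp (g S) ≤ energy θu E θp xstar + S.card * ε :=
    hkey S (le_refl S)
  have hβ0 : (0:ℝ) ≤ β := le_trans zero_le_one hβ
  calc energy θu E θp xhat ≤ β * energy θu E θp (g S) := h1
    _ ≤ β * (energy θu E θp xstar + S.card * ε) := by
        exact mul_le_mul_of_nonneg_left h2 hβ0
    _ = β * energy θu E θp xstar + β * S.card * ε := by ring

end MRF12
end

section
/- Efficient upper bound on δ_i by swapping min and sum: for every labeling x̂ : V → L and every i ∈ V, δ_i(x̂) ≤ max_{y∈L} (θ_i(x̂(i)) − θ_i(y)) + Σ_{k∈N({i})} max_{y∈L, m∈L} (φ_k(x̂(i), m) − φ_k(y, m)), where for k ∈ N({i}), φ_k(u, m) denotes the pairwise potential of the unique edge between i and k evaluated with u as the label of i and m as the label of k (i.e., φ_k(u,m) = θ_{ik}(u,m) if (i,k) ∈ E, and φ_k(u,m) = θ_{ki}(m,u) if (k,i) ∈ E). -/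
open scoped Classical

namespace MRF14

variable {V L : Type*}

/-- Energy of a labeling. -/
noncomputable def energy [Fintype V] (θu : V → L → ℝ) (E : Finset (V × V))
    (θp : V × V → L → L → ℝ) (x : V → L) : ℝ :=
  ∑ i, θu i (x i) + ∑ e ∈ E, θp e (x e.1) (x e.2)

/-- The neighborhood N(S). -/
def nbhd [Fintype V] [DecidableEq V] (E : Finset (V × V)) (S : Finset V) :
    Finset V :=
  Finset.univ.filter (fun j => j ∉ S ∧ ∃ i ∈ S, (i, j) ∈ E ∨ (j, i) ∈ E)

/-- δ_i(x̂): the maximum possible decrease in energy obtainable by changing the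
label of `i` away from `x̂ i`. -/
noncomputable def vdelta [Fintype V] [DecidableEq V] (θu : V → L → ℝ)
    (E : Finset (V × V)) (θp : V × V → L → L → ℝ) (xhat : V → L) (i : V) : ℝ :=
  ⨆ p : L × (V → L),
    (energy θu E θp (Function.update p.2 i (xhat i)) -
      energy θu E θp (Function.update p.2 i p.1))

theorem vdelta_upper_bound [Fintype V] [DecidableEq V] [Fintype L]
    (θu : V → L → ℝ) (E : Finset (V × V)) (θp : V × V → L → L → ℝ)
    (hE1 : ∀ e ∈ E, e.1 ≠ e.2) (hE2 : ∀ i j : V, (i, j) ∈ E → (j, i) ∉ E)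
    (hL : Nontrivial L)
    (xhat : V → L) (i : V)
    (φ : V → L → L → ℝ)
    (hφ₁ : ∀ k ∈ nbhd E ({i} : Finset V), ∀ u m : L,
      (i, k) ∈ E → φ k u m = θp (i, k) u m)
    (hφ₂ : ∀ k ∈ nbhd E ({i} : Finset V), ∀ u m : L,
      (k, i) ∈ E → φ k u m = θp (k, i) m u) :
    vdelta θu E θp xhat i ≤
      (⨆ y : L, (θu i (xhat i) - θu i y)) +
        ∑ k ∈ nbhd E ({i} : Finset V),
          ⨆ p : L × L, (φ k (xhat i) p.2 - φ k p.1 p.2) := by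
  classical
  have hLne : Nonempty L := hL.to_nonempty
  set N := nbhd E ({i} : Finset V) with hN
  set s : V → ℝ := fun k => ⨆ p : L × L, (φ k (xhat i) p.2 - φ k p.1 p.2) with hs
  have hs_bdd : ∀ k, BddAbove (Set.range fun p : L × L =>
      φ k (xhat i) p.2 - φ k p.1 p.2) :=
    fun k => Set.Finite.bddAbove (Set.finite_range _)
  have hs_nonneg : ∀ k, 0 ≤ s k := by
    intro k
    have := le_ciSup (hs_bdd k) (⟨xhat i, hLne.some⟩ : L × L)
    simpa using this
  refine ciSup_le ?_
  rintro ⟨b, z⟩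
  set ua := Function.update z i (xhat i) with hua
  set ub := Function.update z i b with hub
  -- energy difference decomposition
  have h1 : ∀ a : L, ∑ j, θu j (Function.update z i a j)
      = θu i a + ∑ j ∈ Finset.univ.erase i, θu j (z j) := by
    intro a
    rw [← Finset.add_sum_erase _ _ (Finset.mem_univ i), Function.update_self]
    congr 1
    exact Finset.sum_congr rfl fun j hj => by
      rw [Function.update_of_ne (Finset.ne_of_mem_erase hj)]
  have hdiff : energy θu E θp ua - energy θu E θp ub
      = (θu i (xhat i) - θu i b)
        + ∑ e ∈ E, (θp e (ua e.1) (ua e.2) - θp e (ub e.1) (ub e.2)) := by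
    unfold energy
    rw [hua, hub, h1, h1, Finset.sum_sub_distrib]
    ring
  -- bound on the pairwise part
  set d : V × V → ℝ := fun e => θp e (ua e.1) (ua e.2) - θp e (ub e.1) (ub e.2)
    with hd
  set Ei : Finset (V × V) := E.filter (fun e => e.1 = i ∨ e.2 = i) with hEi
  have hEisub : Ei ⊆ E := Finset.filter_subset _ _
  have hzero : ∀ e ∈ E, e ∉ Ei → d e = 0 := by
    intro e he hne
    have h : ¬(e.1 = i ∨ e.2 = i) := fun h =>
      hne (Finset.mem_filter.mpr ⟨he, h⟩)
    push_neg at h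
    simp [hd, hua, hub, Function.update_of_ne h.1, Function.update_of_ne h.2]
  set partner : V × V → V := fun e => if e.1 = i then e.2 else e.1 with hpart
  have hmem : ∀ e ∈ Ei, partner e ∈ N ∧ d e ≤ s (partner e) := by
    intro e heEi
    obtain ⟨he, hcase⟩ := Finset.mem_filter.mp heEi
    have hne12 := hE1 e he
    rcases hcase with h1' | h2'
    · -- e.1 = i
      have he2 : e.2 ≠ i := fun h => hne12 (h1'.trans h.symm)
      have hmemE : (i, e.2) ∈ E := by rw [← h1']; exact he
      have hNmem : e.2 ∈ N := by
        rw [hN]; unfold nbhd; rw [Finset.mem_filter]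
        exact ⟨Finset.mem_univ _, by simpa using he2, i,
          Finset.mem_singleton_self i, Or.inl hmemE⟩
      refine ⟨by simpa [hpart, h1'] using hNmem, ?_⟩
      have hφ := hφ₁ e.2 hNmem
      have hθ : θp (i, e.2) = θp e := by rw [← h1']
      have hA : ua e.1 = xhat i := by rw [hua, h1', Function.update_self]
      have hB : ub e.1 = b := by rw [hub, h1', Function.update_self]
      have hC : ua e.2 = z e.2 := by rw [hua]; exact Function.update_of_ne he2 _ _
      have hD : ub e.2 = z e.2 := by rw [hub]; exact Function.update_of_ne he2 _ _
      have hde : d e = φ e.2 (xhat i) (z e.2) - φ e.2 b (z e.2) := by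
        simp only [hd, hA, hB, hC, hD, hφ _ _ hmemE, hθ]
      have := le_ciSup (hs_bdd e.2) ((b, z e.2) : L × L)
      simp only [hpart, h1', if_pos rfl]
      rw [hde]
      exact this
    · -- e.2 = i
      have he1 : e.1 ≠ i := fun h => hne12 (h.trans h2'.symm)
      have hmemE : (e.1, i) ∈ E := by rw [← h2']; exact he
      have hNmem : e.1 ∈ N := by
        rw [hN]; unfold nbhd; rw [Finset.mem_filter]
        exact ⟨Finset.mem_univ _, by simpa using he1, i,
          Finset.mem_singleton_self i, Or.inr hmemE⟩
      refine ⟨by simpa [hpart, he1] using hNmem, ?_⟩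
      have hφ := hφ₂ e.1 hNmem
      have hθ : θp (e.1, i) = θp e := by rw [← h2']
      have hA : ua e.2 = xhat i := by rw [hua, h2', Function.update_self]
      have hB : ub e.2 = b := by rw [hub, h2', Function.update_self]
      have hC : ua e.1 = z e.1 := by rw [hua]; exact Function.update_of_ne he1 _ _
      have hD : ub e.1 = z e.1 := by rw [hub]; exact Function.update_of_ne he1 _ _
      have hde : d e = φ e.1 (xhat i) (z e.1) - φ e.1 b (z e.1) := by
        simp only [hd, hA, hB, hC, hD, hφ _ _ hmemE, hθ]
      have := le_ciSup (hs_bdd e.1) ((b, z e.1) : L × L)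
      simp only [hpart, if_neg he1]
      rw [hde]
      exact this
  have hinj : ∀ e ∈ Ei, ∀ e' ∈ Ei, partner e = partner e' → e = e' := by
    intro e he e' he' hpe
    obtain ⟨heE, hc⟩ := Finset.mem_filter.mp he
    obtain ⟨heE', hc'⟩ := Finset.mem_filter.mp he'
    have hne := hE1 e heE
    have hne' := hE1 e' heE'
    rcases hc with h1' | h2' <;> rcases hc' with h1'' | h2''
    · -- both e.1 = i
      have : e.2 = e'.2 := by simpa [hpart, h1', h1''] using hpe
      exact Prod.ext (h1'.trans h1''.symm) this
    · -- e.1 = i, e'.2 = i : contradiction via hE2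
      have he1' : e'.1 ≠ i := fun h => hne' (h.trans h2''.symm)
      have hk : e.2 = e'.1 := by simpa [hpart, h1', he1'] using hpe
      exfalso
      have h1 : (i, e.2) ∈ E := by
        have : e = (i, e.2) := Prod.ext h1' rfl
        exact this ▸ heE
      have h2 : (e.2, i) ∈ E := by
        have : e' = (e.2, i) := Prod.ext hk.symm h2''
        exact this ▸ heE'
      exact hE2 _ _ h1 h2
    · have he1 : e.1 ≠ i := fun h => hne (h.trans h2'.symm)
      have hk : e.1 = e'.2 := by simpa [hpart, he1, h1''] using hpe
      exfalso
      have h1 : (i, e.1) ∈ E := by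
        have : e' = (i, e.1) := Prod.ext h1'' hk.symm
        exact this ▸ heE'
      have h2 : (e.1, i) ∈ E := by
        have : e = (e.1, i) := Prod.ext rfl h2'
        exact this ▸ heE
      exact hE2 _ _ h1 h2
    · have he1 : e.1 ≠ i := fun h => hne (h.trans h2'.symm)
      have he1' : e'.1 ≠ i := fun h => hne' (h.trans h2''.symm)
      have : e.1 = e'.1 := by simpa [hpart, he1, he1'] using hpe
      exact Prod.ext this (h2'.trans h2''.symm)
  have himg : Ei.image partner ⊆ N := by
    intro k hk
    obtain ⟨e, heEi, hpe⟩ := Finset.mem_image.mp hk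
    exact hpe ▸ (hmem e heEi).1
  have hpair : ∑ e ∈ E, d e ≤ ∑ k ∈ N, s k := by
    calc ∑ e ∈ E, d e = ∑ e ∈ Ei, d e := (Finset.sum_subset hEisub hzero).symm
      _ ≤ ∑ e ∈ Ei, s (partner e) :=
          Finset.sum_le_sum fun e he => (hmem e he).2
      _ = ∑ k ∈ Ei.image partner, s k := (Finset.sum_image hinj).symm
      _ ≤ ∑ k ∈ N, s k :=
          Finset.sum_le_sum_of_subset_of_nonneg himg fun k _ _ => hs_nonneg k
  have hunary : θu i (xhat i) - θu i b ≤ ⨆ y : L, (θu i (xhat i) - θu i y) :=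
    le_ciSup (f := fun y : L => θu i (xhat i) - θu i y)
      (Set.Finite.bddAbove (Set.finite_range _)) b
  rw [hdiff]
  exact add_le_add hunary hpair

end MRF14
end
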